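/- arXiv:2311.02383 — 2 statements merged into one kernel-verified Lean document; each statement's English description precedes it below -/
import Mathlib

section
/- If a(n) ~ C·n^{−α} e^{c√n} as n → ∞ for constants C, c > 0 and α ∈ ℝ, then for all sufficiently large n₁ and n₂ (with min(n₁,n₂) → ∞), a(n₁)·a(n₂) > a(n₁+n₂). -/
/-!
With `f(x) = C x^{-α} e^{c√x}` one has
`f(m) f(n) / f(m+n) = C (mn/(m+n))^{-α} e^{c(√m + √n - √(m+n))}`.
For `m ≤ n` the exponent is at least `c√m/2` and `mn/(m+n)` lies in `[m/2, m]`, so this ratio is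
at least `C m^{-|α|} e^{c√m/2}`, which tends to infinity with `min(m, n)`. Since `a(m) a(n) / a(m+n)`
differs from it by a factor tending to `1`, it eventually exceeds `1`.
-/

open Filter

noncomputable def expSqrtGrowth (C c α x : ℝ) : ℝ := C * x ^ (-α) * Real.exp (c * √x)

lemma expSqrtGrowth_pos {C c α x : ℝ} (hC : 0 < C) (hx : 0 < x) : 0 < expSqrtGrowth C c α x := by
  unfold expSqrtGrowth; positivity

lemma sqrt_add_le_half_sqrt_add_sqrt {x y : ℝ} (hx : 0 ≤ x) (hxy : x ≤ y) :
    √(x + y) ≤ √x / 2 + √y := by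
  have hsq : √x ≤ √y := Real.sqrt_le_sqrt hxy
  rw [Real.sqrt_le_left (by positivity)]
  nlinarith [Real.sq_sqrt hx, Real.sq_sqrt (hx.trans hxy), Real.sqrt_nonneg x,
    mul_le_mul_of_nonneg_left hsq (Real.sqrt_nonneg x)]

lemma rpow_neg_abs_le_rpow_neg {t k : ℝ} (α : ℝ) (ht : 1 ≤ t) (htk : t ≤ k) :
    k ^ (-|α|) ≤ t ^ (-α) := by
  rcases le_total 0 α with hα | hα
  · rw [abs_of_nonneg hα]
    exact Real.rpow_le_rpow_of_nonpos (by linarith) htk (neg_nonpos.mpr hα)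
  · calc k ^ (-|α|) ≤ 1 := Real.rpow_le_one_of_one_le_of_nonpos (ht.trans htk) (by simp)
      _ ≤ t ^ (-α) := Real.one_le_rpow ht (by linarith)

lemma expSqrtGrowth_mul_div_add (C c α : ℝ) {x y : ℝ} (hx : 0 < x) (hy : 0 < y) :
    expSqrtGrowth C c α x * expSqrtGrowth C c α y / expSqrtGrowth C c α (x + y) =
      C * (x * y / (x + y)) ^ (-α) * Real.exp (c * (√x + √y - √(x + y))) := by
  unfold expSqrtGrowth
  rw [Real.div_rpow (by positivity) (by positivity), Real.mul_rpow hx.le hy.le, mul_sub,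
    Real.exp_sub, mul_add, Real.exp_add]
  have : 0 < (x + y) ^ (-α) := by positivity
  field_simp

lemma expSqrtGrowth_le_mul_div_add {C c : ℝ} (α : ℝ) {x y : ℝ} (hC : 0 < C) (hc : 0 ≤ c)
    (hx : 2 ≤ x) (hxy : x ≤ y) :
    expSqrtGrowth C (c / 2) |α| x ≤
      expSqrtGrowth C c α x * expSqrtGrowth C c α y / expSqrtGrowth C c α (x + y) := by
  rw [expSqrtGrowth_mul_div_add C c α (by linarith) (by linarith)]
  have hpow : x ^ (-|α|) ≤ (x * y / (x + y)) ^ (-α) := by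
    refine rpow_neg_abs_le_rpow_neg α ?_ ?_
    · rw [le_div_iff₀ (by linarith)]; nlinarith
    · rw [div_le_iff₀ (by linarith)]; nlinarith
  have hexp : Real.exp (c / 2 * √x) ≤ Real.exp (c * (√x + √y - √(x + y))) := by
    have hsqrt := sqrt_add_le_half_sqrt_add_sqrt (by linarith) hxy
    exact Real.exp_le_exp.mpr (by nlinarith)
  have hx0 : 0 < x := by linarith
  have hy0 : 0 < y := by linarith
  unfold expSqrtGrowth
  gcongr

lemma tendsto_expSqrtGrowth_atTop {C c : ℝ} (α : ℝ) (hC : 0 < C) (hc : 0 < c) :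
    Tendsto (expSqrtGrowth C c α) atTop atTop := by
  have h := ((tendsto_exp_mul_div_rpow_atTop (2 * α) c hc).const_mul_atTop hC).comp
    Real.tendsto_sqrt_atTop
  refine h.congr' ?_
  filter_upwards [eventually_gt_atTop 0] with x hx
  have : √x ^ (2 * α) = x ^ α := by
    rw [Real.sqrt_eq_rpow, ← Real.rpow_mul hx.le]; congr 1; ring
  simp only [Function.comp, expSqrtGrowth, this, Real.rpow_neg hx.le]
  ring

lemma tendsto_expSqrtGrowth_mul_div_add {C c : ℝ} (α : ℝ) (hC : 0 < C) (hc : 0 < c) :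
    Tendsto (fun p : ℕ × ℕ => expSqrtGrowth C c α p.1 * expSqrtGrowth C c α p.2 /
      expSqrtGrowth C c α (p.1 + p.2 : ℕ)) (atTop ×ˢ atTop) atTop := by
  have hmin : Tendsto (fun p : ℕ × ℕ => ((min p.1 p.2 : ℕ) : ℝ)) (atTop ×ˢ atTop) atTop := by
    refine tendsto_natCast_atTop_atTop.comp (tendsto_atTop.2 fun b => ?_)
    filter_upwards [tendsto_fst.eventually_ge_atTop b, tendsto_snd.eventually_ge_atTop b]
      with p h₁ h₂ using le_min h₁ h₂
  refine tendsto_atTop_mono' _ ?_ ((tendsto_expSqrtGrowth_atTop |α| hC (half_pos hc)).comp hmin)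
  filter_upwards [tendsto_fst.eventually_ge_atTop 2, tendsto_snd.eventually_ge_atTop 2]
    with ⟨m, n⟩ (hm : 2 ≤ m) (hn : 2 ≤ n)
  have hm : (2 : ℝ) ≤ m := by exact_mod_cast hm
  have hn : (2 : ℝ) ≤ n := by exact_mod_cast hn
  show expSqrtGrowth C (c / 2) |α| ((min m n : ℕ) : ℝ) ≤ _
  push_cast
  rcases le_total (m : ℝ) n with h | h
  · rw [min_eq_left h]
    exact expSqrtGrowth_le_mul_div_add α hC hc.le hm h
  · rw [min_eq_right h, mul_comm, add_comm]
    exact expSqrtGrowth_le_mul_div_add α hC hc.le hn h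

theorem eventually_lt_mul_of_tendsto_div {a f : ℕ → ℝ} (hf : ∀ᶠ n in atTop, 0 < f n)
    (ha : Tendsto (fun n => a n / f n) atTop (nhds 1))
    (hF : Tendsto (fun p : ℕ × ℕ => f p.1 * f p.2 / f (p.1 + p.2)) (atTop ×ˢ atTop) atTop) :
    ∀ᶠ p : ℕ × ℕ in atTop ×ˢ atTop, a (p.1 + p.2) < a p.1 * a p.2 := by
  have hsum : Tendsto (fun p : ℕ × ℕ => p.1 + p.2) (atTop ×ˢ atTop) atTop :=
    tendsto_atTop_mono (fun p => Nat.le_add_right _ _) tendsto_fst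
  have hratio : Tendsto (fun p : ℕ × ℕ => a p.1 / f p.1 * (a p.2 / f p.2) /
      (a (p.1 + p.2) / f (p.1 + p.2))) (atTop ×ˢ atTop) (nhds 1) := by
    have h := ((ha.comp tendsto_fst).mul (ha.comp tendsto_snd)).div (ha.comp hsum) one_ne_zero
    rwa [mul_one, div_one] at h
  filter_upwards [(hratio.pos_mul_atTop one_pos hF).eventually_gt_atTop 1,
    tendsto_fst.eventually hf, tendsto_snd.eventually hf, hsum.eventually hf,
    hsum.eventually (ha.eventually_const_lt one_pos)] with p hlt hf₁ hf₂ hfs hqs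
  have has : 0 < a (p.1 + p.2) := (div_pos_iff_of_pos_right hfs).mp hqs
  rw [← one_lt_div has]
  convert hlt using 1
  field_simp

theorem bessenrodt_ono_asymptotic_general (a : ℕ → ℝ) (C c α : ℝ) (hC : 0 < C) (hc : 0 < c)
    (hasym : Tendsto (fun n : ℕ =>
        a n / (C * (n : ℝ) ^ (-α) * Real.exp (c * Real.sqrt n))) atTop (nhds 1)) :
    ∃ N : ℕ, ∀ n₁ n₂ : ℕ, N ≤ n₁ → N ≤ n₂ → a (n₁ + n₂) < a n₁ * a n₂ := by
  have hf : ∀ᶠ n : ℕ in atTop, 0 < expSqrtGrowth C c α n :=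
    (eventually_gt_atTop 0).mono fun n hn => expSqrtGrowth_pos hC (Nat.cast_pos.mpr hn)
  have h := eventually_lt_mul_of_tendsto_div hf hasym (tendsto_expSqrtGrowth_mul_div_add α hC hc)
  rw [prod_atTop_atTop_eq] at h
  exact eventually_atTop_prod_self.mp h

/-- Asymptotic Bessenrodt–Ono inequality: if `a(n) ~ C n^{−α} e^{c√n}` with `C, c > 0`, then
`a(n₁)a(n₂) > a(n₁+n₂)` for all sufficiently large `n₁, n₂`. -/
theorem bessenrodt_ono_asymptotic (a : ℕ → ℝ) (C c α : ℝ) (hC : 0 < C) (hc : 0 < c)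
    (hpos : ∀ n, 0 < a n)
    (hasym : Tendsto (fun n : ℕ =>
        a n / (C * (n : ℝ) ^ (-α) * Real.exp (c * Real.sqrt n))) atTop (nhds 1)) :
    ∃ N : ℕ, ∀ n₁ n₂ : ℕ, N ≤ n₁ → N ≤ n₂ → a (n₁ + n₂) < a n₁ * a n₂ :=
  bessenrodt_ono_asymptotic_general a C c α hC hc hasym
end

section
/- Minor arc bound: there is a constant 𝒞 > 0 such that for z = x + iy with 0 < x and Mx ≤ |y| < π (M > 0 fixed), as z → 0 one has |∏_{n≥1}(1−e^{−nz})^{−1}| ≤ x^{1/2} e^{π²/(6x) − 𝒞/x}. -/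
/-!
Write `q = e^{-z}`. Expanding every `-log (1 - q^n)` in its Taylor series and summing the double
series by columns gives `log |∏ (1 - q^n)⁻¹| = Re ∑_k q^k / (k (1 - q^k))`. Since `|q| = e^{-x}`
and `1/(e^u - 1) ≤ 1/u`, the `k`-th term has modulus at most `1 / (k² x)`, and these bounds sum
to `π² / (6x)`. On the minor arc the first term is smaller by a fixed factor
`θ = (1 + 4M²/π²)^{-1/2} < 1`, because `1 - cos y ≥ 2y²/π²` and `|y| ≥ Mx` give
`|1 - e^{-z}|² ≥ (1 + 4M²/π²) (x e^{-x})²`. The saving `(1 - θ)/x` in the exponent absorbs the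
factor `x^{1/2}` once `x` is small.
-/

open scoped Real

section EulerFunction

variable {q : ℂ}

lemma norm_pow_succ_lt_one (hq : ‖q‖ < 1) (n : ℕ) : ‖q ^ (n + 1)‖ < 1 := by
  rw [norm_pow]; exact pow_lt_one₀ (norm_nonneg q) hq n.succ_ne_zero

lemma one_sub_pow_succ_ne_zero (hq : ‖q‖ < 1) (n : ℕ) : 1 - q ^ (n + 1) ≠ 0 := by
  intro h
  simpa [← sub_eq_zero.mp h] using norm_pow_succ_lt_one hq n

lemma summable_pow_succ_pow_succ_div (hq : ‖q‖ < 1) :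
    Summable fun p : ℕ × ℕ => (q ^ (p.1 + 1)) ^ (p.2 + 1) / ((p.2 : ℂ) + 1) := by
  have hgeom := summable_geometric_of_lt_one (norm_nonneg q) hq
  refine .of_norm_bounded (hgeom.mul_of_nonneg hgeom (fun _ => by positivity)
    (fun _ => by positivity)) fun ⟨n, k⟩ => ?_
  have hk : (1 : ℝ) ≤ ‖(k : ℂ) + 1‖ := by norm_cast; simp
  calc ‖(q ^ (n + 1)) ^ (k + 1) / ((k : ℂ) + 1)‖ ≤ ‖q‖ ^ ((n + 1) * (k + 1)) := by
        rw [norm_div, norm_pow, norm_pow, ← pow_mul]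
        exact div_le_self (by positivity) hk
    _ ≤ ‖q‖ ^ (n + k) := pow_le_pow_of_le_one (norm_nonneg q) hq.le (by nlinarith)
    _ = ‖q‖ ^ n * ‖q‖ ^ k := pow_add _ _ _

theorem hasSum_log_one_sub_pow (hq : ‖q‖ < 1) :
    HasSum (fun n : ℕ => Complex.log (1 - q ^ (n + 1)))
      (-∑' k : ℕ, q ^ (k + 1) / ((k + 1) * (1 - q ^ (k + 1)))) := by
  set F : ℕ × ℕ → ℂ := fun p => (q ^ (p.1 + 1)) ^ (p.2 + 1) / ((p.2 : ℂ) + 1)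
  have hF : HasSum F (∑' p, F p) := (summable_pow_succ_pow_succ_div hq).hasSum
  have hrows : HasSum (fun n : ℕ => -Complex.log (1 - q ^ (n + 1))) (∑' p, F p) :=
    hF.prod_fiberwise fun n => (Complex.hasSum_taylorSeries_neg_log' (norm_pow_succ_lt_one hq n) :)
  have hcols : HasSum (fun k : ℕ => q ^ (k + 1) / ((k + 1) * (1 - q ^ (k + 1)))) (∑' p, F p) :=
    ((Equiv.prodComm ℕ ℕ).hasSum_iff.mpr hF).prod_fiberwise fun k => by
      have hgeom := ((hasSum_geometric_of_norm_lt_one (norm_pow_succ_lt_one hq k)).mul_left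
        (q ^ (k + 1))).div_const ((k : ℂ) + 1)
      rw [div_mul_eq_div_div_swap, div_eq_mul_inv _ (1 - _)]
      refine hgeom.congr_fun fun n => ?_
      simp only [F, Function.comp_apply, Equiv.prodComm_apply, Prod.swap]
      rw [← pow_mul, mul_comm, pow_mul, pow_succ]
      ring
  rw [hcols.tsum_eq]
  simpa using hrows.neg

theorem norm_inv_tprod_one_sub_pow (hq : ‖q‖ < 1) :
    ‖(∏' n : ℕ, (1 - q ^ (n + 1)))⁻¹‖
      = Real.exp (∑' k : ℕ, q ^ (k + 1) / ((k + 1) * (1 - q ^ (k + 1)))).re := by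
  rw [(Complex.hasProd_of_hasSum_log (one_sub_pow_succ_ne_zero hq)
    (hasSum_log_one_sub_pow hq)).tprod_eq, ← Complex.exp_neg, neg_neg, Complex.norm_exp]

end EulerFunction

lemma mul_exp_neg_le_one_sub_exp_neg (x : ℝ) : x * Real.exp (-x) ≤ 1 - Real.exp (-x) := by
  have h := mul_le_mul_of_nonneg_right (Real.add_one_le_exp x) (Real.exp_nonneg (-x))
  rw [← Real.exp_add, add_neg_cancel, Real.exp_zero] at h
  linarith

lemma norm_div_one_sub_le {w : ℂ} (hw : ‖w‖ < 1) : ‖w / (1 - w)‖ ≤ ‖w‖ / (1 - ‖w‖) := by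
  have h : 1 - ‖w‖ ≤ ‖1 - w‖ := by simpa using norm_sub_norm_le (1 : ℂ) w
  rw [norm_div]
  exact div_le_div_of_nonneg_left (norm_nonneg w) (by linarith) h

lemma norm_pow_succ_div_le {q : ℂ} {x : ℝ} (hx : 0 < x) (hq : ‖q‖ = Real.exp (-x)) (k : ℕ) :
    ‖q ^ (k + 1) / ((k + 1) * (1 - q ^ (k + 1)))‖ ≤ 1 / ((k + 1) ^ 2 * x) := by
  set u := (k + 1) * x
  have hu : 0 < u := by positivity
  have hw : ‖q ^ (k + 1)‖ = Real.exp (-u) := by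
    rw [norm_pow, hq, ← Real.exp_nat_mul]; congr 1; push_cast; ring
  have ht : Real.exp (-u) < 1 := Real.exp_lt_one_iff.mpr (by linarith)
  have hk : ‖(k : ℂ) + 1‖ = k + 1 := by norm_cast
  calc ‖q ^ (k + 1) / ((k + 1) * (1 - q ^ (k + 1)))‖
      = ‖q ^ (k + 1) / (1 - q ^ (k + 1))‖ / (k + 1) := by
        rw [mul_comm, ← div_div, norm_div _ ((k : ℂ) + 1), hk]
    _ ≤ Real.exp (-u) / (1 - Real.exp (-u)) / (k + 1) := by
        gcongr
        rw [← hw]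
        exact norm_div_one_sub_le (hw ▸ ht)
    _ ≤ 1 / ((k + 1) ^ 2 * x) := by
        rw [div_div, div_le_div_iff₀ (by nlinarith) (by positivity)]
        nlinarith [mul_exp_neg_le_one_sub_exp_neg u]

lemma sq_norm_one_sub_exp_neg (z : ℂ) :
    ‖1 - Complex.exp (-z)‖ ^ 2
      = (1 - Real.exp (-z.re)) ^ 2 + 2 * Real.exp (-z.re) * (1 - Real.cos z.im) := by
  rw [Complex.sq_norm, Complex.normSq_apply]
  simp only [Complex.sub_re, Complex.sub_im, Complex.one_re, Complex.one_im, Complex.exp_re,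
    Complex.exp_im, Complex.neg_re, Complex.neg_im, Real.cos_neg, Real.sin_neg]
  linear_combination Real.exp (-z.re) ^ 2 * Real.sin_sq_add_cos_sq z.im

lemma sq_mul_le_sq_norm_one_sub_exp_neg {M : ℝ} {z : ℂ} (hM : 0 ≤ M) (hx : 0 < z.re)
    (hMy : M * z.re ≤ |z.im|) (hy : |z.im| ≤ π) :
    (1 + 4 * M ^ 2 / π ^ 2) * (z.re * Real.exp (-z.re)) ^ 2 ≤ ‖1 - Complex.exp (-z)‖ ^ 2 := by
  set x := z.re
  set y := z.im
  set E := Real.exp (-x)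
  have hE : 0 < E := Real.exp_pos _
  have hE1 : E ≤ 1 := Real.exp_le_one_iff.mpr (by linarith)
  have hxE : x * E ≤ 1 - E := mul_exp_neg_le_one_sub_exp_neg x
  have hcos : 2 / π ^ 2 * y ^ 2 ≤ 1 - Real.cos y := by
    linarith [Real.cos_le_one_sub_mul_cos_sq hy]
  have hMxy : (M * x) ^ 2 ≤ y ^ 2 := by
    rw [← sq_abs y]; exact pow_le_pow_left₀ (by positivity) hMy 2
  rw [sq_norm_one_sub_exp_neg]
  calc (1 + 4 * M ^ 2 / π ^ 2) * (x * E) ^ 2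
      = (x * E) ^ 2 + 4 / π ^ 2 * (M * x) ^ 2 * E ^ 2 := by ring
    _ ≤ (1 - E) ^ 2 + 4 / π ^ 2 * y ^ 2 * E := by
        gcongr ?_ + ?_
        · exact pow_le_pow_left₀ (by positivity) hxE 2
        · calc 4 / π ^ 2 * (M * x) ^ 2 * E ^ 2 ≤ 4 / π ^ 2 * y ^ 2 * E ^ 2 := by gcongr
            _ ≤ 4 / π ^ 2 * y ^ 2 * E := by
                gcongr; nlinarith
    _ ≤ (1 - E) ^ 2 + 2 * E * (1 - Real.cos y) := by
        linear_combination (2 * E) * hcos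

lemma re_exp_neg_div_one_sub_le {M : ℝ} {z : ℂ} (hM : 0 ≤ M) (hx : 0 < z.re)
    (hMy : M * z.re ≤ |z.im|) (hy : |z.im| ≤ π) :
    (Complex.exp (-z) / (1 - Complex.exp (-z))).re ≤ (√(1 + 4 * M ^ 2 / π ^ 2))⁻¹ / z.re := by
  set c := √(1 + 4 * M ^ 2 / π ^ 2)
  set E := Real.exp (-z.re)
  have hc : 0 < c := Real.sqrt_pos.mpr (by positivity)
  have hE : 0 < E := Real.exp_pos _
  have hlower : c * (z.re * E) ≤ ‖1 - Complex.exp (-z)‖ := by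
    have := Real.sqrt_le_sqrt (sq_mul_le_sq_norm_one_sub_exp_neg hM hx hMy hy)
    rwa [Real.sqrt_mul (by positivity), Real.sqrt_sq (by positivity),
      Real.sqrt_sq (norm_nonneg _)] at this
  calc (Complex.exp (-z) / (1 - Complex.exp (-z))).re
      ≤ ‖Complex.exp (-z)‖ / ‖1 - Complex.exp (-z)‖ := by
        rw [← norm_div]; exact Complex.re_le_norm _
    _ ≤ E / (c * (z.re * E)) := by
        rw [Complex.norm_exp, Complex.neg_re]
        gcongr
    _ = c⁻¹ / z.re := by field_simp

lemma re_tsum_lambert_le {q : ℂ} {x θ : ℝ} (hx : 0 < x) (hq : ‖q‖ = Real.exp (-x))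
    (h0 : (q / (1 - q)).re ≤ θ / x) :
    (∑' k : ℕ, q ^ (k + 1) / ((k + 1) * (1 - q ^ (k + 1)))).re ≤ (π ^ 2 / 6 - 1 + θ) / x := by
  set b : ℕ → ℝ := fun k => 1 / ((k + 1) ^ 2 * x)
  have hb : HasSum b (π ^ 2 / 6 / x) := by
    have h := ((hasSum_nat_add_iff' 1).mpr hasSum_zeta_two).div_const x
    rw [Finset.sum_range_one, Nat.cast_zero, zero_pow two_ne_zero, div_zero, sub_zero] at h
    exact h.congr_fun fun k => by simp only [b]; push_cast; rw [div_div]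
  have ha := Complex.hasSum_re (Summable.of_norm_bounded hb.summable
    (norm_pow_succ_div_le hx hq)).hasSum
  refine (hasSum_le (fun k => ?_) ha (hb.update 0 (θ / x))).trans_eq ?_
  · rcases k with _ | k
    · simpa using h0
    · rw [Function.update_of_ne k.succ_ne_zero]
      exact (Complex.re_le_norm _).trans (norm_pow_succ_div_le hx hq _)
  · simp only [b]; ring

lemma exp_neg_div_le_sqrt {a x : ℝ} (hx : 0 < x) (ha : √x ≤ a) : Real.exp (-(a / x)) ≤ √x := by
  have hs : 0 < √x := Real.sqrt_pos.mpr hx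
  have h : (√x)⁻¹ ≤ Real.exp (a / x) :=
    calc (√x)⁻¹ = √x / x := by
          field_simp; rw [Real.sq_sqrt hx.le]
      _ ≤ a / x := by gcongr
      _ ≤ Real.exp (a / x) := by linarith [Real.add_one_le_exp (a / x)]
  rw [Real.exp_neg]
  exact inv_le_of_inv_le₀ hs h

/-- Minor-arc bound: there is `𝒞 > 0` so that for `z = x + iy` with `0 < x`,
`Mx ≤ |y| < π` and `|z|` sufficiently small,
`|∏_{n≥1}(1−e^{−nz})⁻¹| ≤ x^{1/2} e^{π²/(6x) − 𝒞/x}`. -/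
theorem euler_product_minor_arc (M : ℝ) (hM : 0 < M) :
    ∃ C > (0 : ℝ), ∃ δ > (0 : ℝ), ∀ z : ℂ, 0 < z.re → M * z.re ≤ |z.im| →
      |z.im| < Real.pi → ‖z‖ ≤ δ →
      ‖(∏' n : ℕ, (1 - Complex.exp (-(((n : ℂ) + 1) * z))))⁻¹‖
        ≤ z.re ^ ((1 : ℝ) / 2) * Real.exp (Real.pi ^ 2 / (6 * z.re) - C / z.re) := by
  set θ := (√(1 + 4 * M ^ 2 / π ^ 2))⁻¹
  have hθ : θ < 1 :=
    inv_lt_one_of_one_lt₀ (Real.lt_sqrt zero_le_one |>.mpr (by simp; positivity))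
  set C := (1 - θ) / 2
  have hC : 0 < C := half_pos (sub_pos.mpr hθ)
  refine ⟨C, hC, C ^ 2, by positivity, fun z hx hMy hy hz => ?_⟩
  have hq : ‖Complex.exp (-z)‖ = Real.exp (-z.re) := by rw [Complex.norm_exp, Complex.neg_re]
  have hsqrt : √z.re ≤ C := Real.sqrt_le_iff.mpr ⟨hC.le, (Complex.re_le_norm z).trans hz⟩
  have hfactor (n : ℕ) : Complex.exp (-(((n : ℂ) + 1) * z)) = Complex.exp (-z) ^ (n + 1) := by
    rw [← Complex.exp_nat_mul]; push_cast; ring_nf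
  simp_rw [hfactor]
  rw [norm_inv_tprod_one_sub_pow (hq ▸ Real.exp_lt_one_iff.mpr (by linarith)),
    ← Real.sqrt_eq_rpow]
  calc _ ≤ Real.exp ((π ^ 2 / 6 - 1 + θ) / z.re) :=
        Real.exp_le_exp.mpr <|
          re_tsum_lambert_le hx hq (re_exp_neg_div_one_sub_le hM.le hx hMy hy.le)
    _ = Real.exp (-(C / z.re)) * Real.exp (π ^ 2 / (6 * z.re) - C / z.re) := by
        rw [← Real.exp_add]; congr 1; field_simp; ring
    _ ≤ _ := by gcongr; exact exp_neg_div_le_sqrt hx hsqrt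
end
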